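/- Let f : [n] → [a,b] with r = b − a > 0 and bounds l = −u, u : {1,…,n−1} → ℝ with u(t) > 0 for all t, and u_M = max_t u(t). Then the number of violated unordered pairs of f is at least (L1(f,P)/4) · min{ 1/u_M, (n−1)/r }, where L1(f,P) is the unnormalized L1-distance of f to the property P of functions h : [n] → ℝ satisfying −u(t) ≤ h(t+1) − h(t) ≤ u(t) for all t. -/

import Mathlib

open Finset
open scoped Classical

/-- The one-dimensional quasimetric of bounds `(l,u)`. -/
def m1 (l u : ℕ → ℝ) (x y : ℕ) : ℝ :=
  (∑ t ∈ Finset.Ico y x, u t) - ∑ t ∈ Finset.Ico x y, l t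

/-- The violation score of a pair `(x,y)` for `h : [n] → ℝ`. -/
def vs1 (l u : ℕ → ℝ) (h : ℕ → ℝ) (x y : ℕ) : ℝ :=
  max (h x - h y - m1 l u x y) (h y - h x - m1 l u y x)

/-!
Put the point `x` of `[n]` at `X x = ∑_{t < x} u t` on the real line: then `P` is the set of
`1`-Lipschitz functions and `(x, y)` is violated iff `|X x - X y| < |f x - f y|`.

Let `h ∈ P` be `L1`-closest to `f` and call `(p, q)` tight when `h p - h q = |X p - X q|`. For
`A ⊆ {h < f}`, raising `h` by a small `δ` on the points tightly below `A` stays in `P`, so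
optimality of `h` is Hall's condition for an injection of `{h < f}` into `{f ≤ h}` along tight
pairs; symmetrically `{f < h}` injects into `{h ≤ f}`. As in the proof of Schröder–Bernstein,
the two injections combine into a matching `E` of tight pairs covering `{h ≠ f}`, whence
`L1(f, P) ≤ ∑_{(x, y) ∈ E} (f x - f y - |X x - X y|)`.

A pair `(x, y)` of score `w > 0` forces a violated pair `{x, z}` or `{z, y}` for every `z` within
`w / (2 u_M)` steps of the segment between `x` and `y`, hence at least
`min (w / (2 u_M)) (n - 1) ≥ w / (2 K)` violated pairs through `x` or `y`, where
`K = max u_M (r / (n - 1))`. A violated pair meets at most two pairs of the matching `E`, so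
`L1(f, P) ≤ 4 K · #violated`, and `1 / K = min (1 / u_M) ((n - 1) / r)`.
-/

open Filter Topology

namespace LineLipschitz

section Matching

variable {α : Type*}

/-- Banach's decomposition lemma, the heart of the Schröder–Bernstein theorem. -/
lemma exists_eq_sdiff_image_sdiff_image (P M : Set α) (φ ψ : α → α) :
    ∃ C : Set α, C = P \ ψ '' (M \ φ '' C) := by
  let F : Set α →o Set α := ⟨fun C => P \ ψ '' (M \ φ '' C), fun _ _ h =>
    Set.sdiff_subset_sdiff_right (Set.image_mono (Set.sdiff_subset_sdiff_right (Set.image_mono h)))⟩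
  exact ⟨F.lfp, F.map_lfp.symm⟩

lemma exists_injOn_of_forall_card_le {P T : Finset α} {r : α → α → Prop}
    (h : ∀ A ⊆ P, #A ≤ #{q ∈ T | ∃ p ∈ A, r p q}) :
    ∃ φ : α → α, Set.InjOn φ P ∧ ∀ p ∈ P, φ p ∈ T ∧ r p (φ p) := by
  obtain ⟨F, hFinj, hF⟩ := (all_card_le_biUnion_card_iff_exists_injective
    fun p : P => {q ∈ T | r p q}).1 fun s => by
      calc #s = #(s.map (Function.Embedding.subtype _)) := (card_map _).symm
        _ ≤ #{q ∈ T | ∃ p ∈ s.map (Function.Embedding.subtype _), r p q} :=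
          h _ fun p hp => by obtain ⟨p', -, rfl⟩ := Finset.mem_map.1 hp; exact p'.2
        _ = #(s.biUnion fun p => {q ∈ T | r p q}) := by
          congr 1
          ext q
          simp only [mem_filter, Finset.mem_map, mem_biUnion, Function.Embedding.coe_subtype]
          constructor
          · rintro ⟨hq, _, ⟨p, hp, rfl⟩, hpq⟩
            exact ⟨p, hp, hq, hpq⟩
          · rintro ⟨p, hp, hq, hpq⟩
            exact ⟨hq, p, ⟨p, hp, rfl⟩, hpq⟩
  refine ⟨fun p => if hp : p ∈ P then F ⟨p, hp⟩ else p, fun p hp p' hp' hpp' => ?_, fun p hp => ?_⟩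
  · simp only [mem_coe] at hp hp'
    exact congrArg Subtype.val (hFinj (by simpa [hp, hp'] using hpp'))
  · simpa [hp] using hF ⟨p, hp⟩

variable [DecidableEq α]

def IsMatching (E : Finset (α × α)) : Prop :=
  (E : Set (α × α)).PairwiseDisjoint fun e => ({e.1, e.2} : Finset α)

lemma isMatching_of_injOn {E : Finset (α × α)} (hfst : Set.InjOn Prod.fst (E : Set (α × α)))
    (hsnd : Set.InjOn Prod.snd (E : Set (α × α))) (hcross : ∀ e ∈ E, ∀ e' ∈ E, e.1 ≠ e'.2) :
    IsMatching E := by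
  intro e he e' he' hne
  refine Finset.disjoint_left.2 fun v hv hv' => ?_
  simp only [mem_insert, mem_singleton] at hv hv'
  rcases hv with rfl | rfl <;> rcases hv' with h | h
  · exact hne (hfst he he' h)
  · exact hcross e he e' he' h
  · exact hcross e' he' e he h.symm
  · exact hne (hsnd he he' h)

theorem exists_isMatching_of_injOn {P M L R : Finset α} {r : α → α → Prop}
    (hr : ∀ a b c, r a b → r b c → r a c)
    (hPL : P ⊆ L) (hMR : M ⊆ R) (hPR : Disjoint P R) (hLM : Disjoint L M)
    {φ ψ : α → α} (hφ : Set.InjOn φ P) (hψ : Set.InjOn ψ M)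
    (hφP : ∀ p ∈ P, φ p ∈ R ∧ r p (φ p)) (hψM : ∀ m ∈ M, ψ m ∈ L ∧ r (ψ m) m) :
    ∃ E : Finset (α × α), IsMatching E ∧ (∀ e ∈ E, e.1 ∈ L ∧ e.2 ∈ R ∧ r e.1 e.2) ∧
      P ⊆ E.image Prod.fst ∧ M ⊆ E.image Prod.snd := by
  /- The points of `C` are matched along `φ`, the points of `M` missed by `φ` on `C` along `ψ`;
  by the choice of `C` these cover `P`. A `φ`-edge and a `ψ`-edge meeting at a point of `R ∩ L`
  are merged by transitivity. -/
  obtain ⟨C, hC⟩ := exists_eq_sdiff_image_sdiff_image (P : Set α) M φ ψ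
  set Mr := (M : Set α) \ φ '' C
  replace hC : ∀ x, x ∈ C ↔ x ∈ P ∧ x ∉ ψ '' Mr := fun x => Set.ext_iff.mp hC x
  have hφC : ∀ x ∈ C, φ x ∈ R := fun x hx => (hφP x ((hC x).1 hx).1).1
  have hψMr : ∀ m ∈ Mr, ψ m ∈ L := fun m hm => (hψM m hm.1).1
  have hφinj : ∀ p ∈ C, ∀ p' ∈ C, φ p = φ p' → p = p' :=
    fun p hp p' hp' => hφ ((hC p).1 hp).1 ((hC p').1 hp').1
  have hψinj : ∀ m ∈ Mr, ∀ m' ∈ Mr, ψ m = ψ m' → m = m' := fun m hm m' hm' => hψ hm.1 hm'.1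
  have hPR' : ∀ x ∈ P, x ∉ R := fun x hx hx' => Finset.disjoint_left.mp hPR hx hx'
  have hLM' : ∀ x ∈ L, x ∉ M := fun x hx hx' => Finset.disjoint_left.mp hLM hx hx'
  let good : α × α → Prop := fun e =>
    (e.1 ∈ C ∧ e.2 = φ e.1 ∧ e.2 ∉ ψ '' Mr) ∨ (e.2 ∈ Mr ∧ e.1 = ψ e.2 ∧ e.1 ∉ φ '' C) ∨
      (e.1 ∈ C ∧ e.2 ∈ Mr ∧ φ e.1 = ψ e.2)
  refine ⟨{e ∈ L ×ˢ R | good e}, isMatching_of_injOn ?_ ?_ ?_, ?_, ?_, ?_⟩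
  · rintro ⟨x, y⟩ he ⟨x', y'⟩ he' (rfl : x = x')
    simp only [coe_filter, mem_product, good] at he he'
    have := hC x
    grind [Set.mem_image_of_mem]
  · rintro ⟨x, y⟩ he ⟨x', y'⟩ he' (rfl : y = y')
    simp only [coe_filter, mem_product, good] at he he'
    grind [Set.mem_image_of_mem]
  · rintro ⟨x, y⟩ he ⟨x', y'⟩ he' (rfl : x = y')
    simp only [mem_filter, mem_product, good] at he he'
    have := hC x
    grind [Set.mem_image_of_mem]
  · rintro ⟨x, y⟩ he
    simp only [mem_filter, mem_product, good] at he
    obtain ⟨⟨hx, hy⟩, h | h | h⟩ := he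
    · exact ⟨hx, hy, h.2.1 ▸ (hφP x ((hC x).1 h.1).1).2⟩
    · exact ⟨hx, hy, h.2.1 ▸ (hψM y h.1.1).2⟩
    · exact ⟨hx, hy, hr _ _ _ (hφP x ((hC x).1 h.1).1).2 (h.2.2 ▸ (hψM y h.2.1.1).2)⟩
  · intro p hp
    simp only [mem_image, mem_filter, mem_product, Prod.exists, good]
    by_cases hpC : p ∈ C
    · by_cases hφp : φ p ∈ ψ '' Mr
      · obtain ⟨m, hm, hmp⟩ := hφp
        exact ⟨p, m, ⟨⟨hPL hp, hMR hm.1⟩, Or.inr (Or.inr ⟨hpC, hm, hmp.symm⟩)⟩, rfl⟩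
      · exact ⟨p, φ p, ⟨⟨hPL hp, hφC p hpC⟩, Or.inl ⟨hpC, rfl, hφp⟩⟩, rfl⟩
    · obtain ⟨m, hm, rfl⟩ : p ∈ ψ '' Mr := by have := hC p; tauto
      refine ⟨ψ m, m, ⟨⟨hPL hp, hMR hm.1⟩, Or.inr (Or.inl ⟨hm, rfl, ?_⟩)⟩, rfl⟩
      rintro ⟨p', hp', hpp'⟩
      exact hPR' _ hp (hpp' ▸ hφC p' hp')
  · intro m hm
    simp only [mem_image, mem_filter, mem_product, Prod.exists, good]
    by_cases hmC : m ∈ φ '' C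
    · obtain ⟨p, hp, rfl⟩ := hmC
      refine ⟨p, φ p, ⟨⟨hPL ((hC p).1 hp).1, hMR hm⟩, Or.inl ⟨hp, rfl, ?_⟩⟩, rfl⟩
      rintro ⟨m', hm', hmm'⟩
      exact hLM' _ (hmm' ▸ hψMr m' hm') hm
    · have hmr : m ∈ Mr := ⟨hm, hmC⟩
      by_cases hψm : ψ m ∈ φ '' C
      · obtain ⟨p, hp, hpm⟩ := hψm
        exact ⟨p, m, ⟨⟨hPL ((hC p).1 hp).1, hMR hm⟩, Or.inr (Or.inr ⟨hp, hmr, hpm⟩)⟩, rfl⟩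
      · exact ⟨ψ m, m, ⟨⟨hψMr m hmr, hMR hm⟩, Or.inr (Or.inl ⟨hmr, rfl, hψm⟩)⟩, rfl⟩

def touching (V : Finset (α × α)) (s : Finset α) : Finset (α × α) :=
  {v ∈ V | v.1 ∈ s ∨ v.2 ∈ s}

lemma sum_card_filter_le_of_pairwiseDisjoint {ι β : Type*} {E : Finset ι} {s : ι → Finset α}
    (hs : (E : Set ι).PairwiseDisjoint s) (V : Finset β) (g : β → α) :
    ∑ e ∈ E, #{v ∈ V | g v ∈ s e} ≤ #V := by
  rw [← card_biUnion (t := fun e => {v ∈ V | g v ∈ s e}) fun e he e' he' hne =>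
    disjoint_filter.2 fun v _ hv hv' => Finset.disjoint_left.1 (hs he he' hne) hv hv']
  exact card_le_card (biUnion_subset.2 fun _ _ => filter_subset _ _)

lemma IsMatching.sum_card_touching_le {E : Finset (α × α)} (hE : IsMatching E)
    (V : Finset (α × α)) : ∑ e ∈ E, #(touching V {e.1, e.2}) ≤ 2 * #V := by
  calc ∑ e ∈ E, #(touching V {e.1, e.2})
      ≤ ∑ e ∈ E, (#{v ∈ V | v.1 ∈ ({e.1, e.2} : Finset α)} +
          #{v ∈ V | v.2 ∈ ({e.1, e.2} : Finset α)}) :=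
        sum_le_sum fun e _ => by rw [touching, filter_or]; exact card_union_le _ _
    _ ≤ #V + #V := by
        rw [sum_add_distrib]
        exact add_le_add (sum_card_filter_le_of_pairwiseDisjoint hE V Prod.fst)
          (sum_card_filter_le_of_pairwiseDisjoint hE V Prod.snd)
    _ = 2 * #V := (two_mul _).symm

end Matching

section Line

variable {n : ℕ} {X f h : ℕ → ℝ} {uM : ℝ}

def IsLipschitzAlong (n : ℕ) (X h : ℕ → ℝ) : Prop :=
  ∀ x ∈ Icc 1 n, ∀ y ∈ Icc 1 n, h x - h y ≤ |X x - X y|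

def l1Dist (n : ℕ) (f h : ℕ → ℝ) : ℝ := ∑ t ∈ Icc 1 n, |f t - h t|

def Tight (X h : ℕ → ℝ) (p q : ℕ) : Prop := |X p - X q| ≤ h p - h q

lemma IsLipschitzAlong.abs_sub_le (hh : IsLipschitzAlong n X h) {x y : ℕ} (hx : x ∈ Icc 1 n)
    (hy : y ∈ Icc 1 n) : |h x - h y| ≤ |X x - X y| :=
  abs_sub_le_iff.2 ⟨hh x hx y hy, abs_sub_comm (X x) (X y) ▸ hh y hy x hx⟩

lemma IsLipschitzAlong.neg (hh : IsLipschitzAlong n X h) : IsLipschitzAlong n X (-h) :=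
  fun x hx y hy => by simpa [abs_sub_comm, add_comm] using hh y hy x hx

lemma l1Dist_neg (f h : ℕ → ℝ) : l1Dist n (-f) (-h) = l1Dist n f h := by
  simp only [l1Dist, Pi.neg_apply, ← abs_neg (f _ - h _)]
  ring_nf

lemma tight_neg {p q : ℕ} : Tight X (-h) p q ↔ Tight X h q p := by
  simp only [Tight, Pi.neg_apply, abs_sub_comm (X p)]
  ring_nf

lemma Tight.trans {p q r : ℕ} (hpq : Tight X h p q) (hqr : Tight X h q r) : Tight X h p r :=
  (abs_sub_le _ _ _).trans (by unfold Tight at *; linarith)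

lemma isClosed_setOf_isLipschitzAlong : IsClosed {g | IsLipschitzAlong n X g} := by
  simp only [IsLipschitzAlong, Set.ofPred_forall]
  exact isClosed_biInter fun x _ => isClosed_biInter fun y _ =>
    isClosed_le (by fun_prop) continuous_const

lemma exists_isMinOn_l1Dist {a b : ℝ} (hab : a ≤ b) (hf : ∀ t ∈ Icc 1 n, f t ∈ Set.Icc a b) :
    ∃ h, IsLipschitzAlong n X h ∧ IsMinOn (l1Dist n f) {g | IsLipschitzAlong n X g} h := by
  have hK : IsCompact ({g | IsLipschitzAlong n X g} ∩ Set.univ.pi fun _ => Set.Icc a b) :=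
    (isCompact_univ_pi fun _ => isCompact_Icc).inter_left isClosed_setOf_isLipschitzAlong
  have hcont : Continuous (l1Dist n f) := by unfold l1Dist; fun_prop
  obtain ⟨h, hhK, hmin⟩ := hK.exists_isMinOn
    ⟨fun _ => a, fun _ _ _ _ => by simp, fun _ _ => ⟨le_rfl, hab⟩⟩ hcont.continuousOn
  refine ⟨h, hhK.1, fun g hg => ?_⟩
  let clamp : ℕ → ℝ := fun t => Set.projIcc a b hab (g t)
  have hclamp : ∀ s t, |clamp s - clamp t| ≤ |g s - g t| :=
    fun _ _ => Set.abs_projIcc_sub_projIcc hab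
  calc l1Dist n f h ≤ l1Dist n f clamp :=
        hmin ⟨fun x hx y hy => (le_abs_self _).trans ((hclamp x y).trans (hg.abs_sub_le hx hy)),
          fun t _ => Subtype.mem _⟩
    _ ≤ l1Dist n f g := sum_le_sum fun t ht => by
        simpa [clamp, Set.projIcc_of_mem hab (hf t ht)] using
          Set.abs_projIcc_sub_projIcc hab (c := f t) (d := g t)

noncomputable def tightRegion (n : ℕ) (X h : ℕ → ℝ) (A : Finset ℕ) : Finset ℕ :=
  {t ∈ Icc 1 n | ∃ p ∈ A, Tight X h p t}

lemma eventually_exists_raise (hh : IsLipschitzAlong n X h) {A : Finset ℕ} (hA : A ⊆ Icc 1 n) :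
    ∀ᶠ δ in 𝓝[>] (0:ℝ), ∃ g, IsLipschitzAlong n X g ∧
      ∀ t ∈ Icc 1 n, g t = if t ∈ tightRegion n X h A then h t + δ else h t := by
  rcases A.eq_empty_or_nonempty with rfl | hAne
  · exact Eventually.of_forall fun δ => ⟨h, hh, fun t _ => by simp [tightRegion]⟩
  /- `cone` is the upper envelope of the cones of slope one below `h` with apex in `A`; it touches
  `h` exactly on the tight region, so `max h (cone + δ)` is the raised function for small `δ`. -/
  let cone : ℕ → ℝ := fun t => A.sup' hAne fun p => h p - |X p - X t|
  have hcone_le : ∀ t ∈ Icc 1 n, cone t ≤ h t := fun t ht => sup'_le _ _ fun p hp => by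
    linarith [hh p (hA hp) t ht]
  have hcone_eq : ∀ t ∈ tightRegion n X h A, cone t = h t := by
    intro t ht
    obtain ⟨p, hp, hpt⟩ := (mem_filter.1 ht).2
    exact (hcone_le t (mem_filter.1 ht).1).antisymm
      (le_sup'_of_le _ hp (by unfold Tight at hpt; linarith))
  have hcone_lt : ∀ t ∈ Icc 1 n, t ∉ tightRegion n X h A → cone t < h t := by
    intro t ht htU
    refine (sup'_lt_iff _).2 fun p hp => ?_
    have : ¬ Tight X h p t := fun hpt => htU (mem_filter.2 ⟨ht, p, hp, hpt⟩)
    unfold Tight at this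
    linarith
  have hcone : ∀ x y, cone x ≤ cone y + |X x - X y| := fun x y => sup'_le _ _ fun p hp => by
    linarith [le_sup' (fun p => h p - |X p - X y|) hp, abs_sub_le (X p) (X x) (X y)]
  filter_upwards [eventually_mem_nhdsWithin, (eventually_all_finset _).2 fun t ht =>
    nhdsWithin_le_nhds (eventually_lt_nhds (sub_pos.2 (hcone_lt t (mem_sdiff.1 ht).1
      (mem_sdiff.1 ht).2)))] with δ (hδ0 : 0 < δ) hδ
  refine ⟨fun t => max (h t) (cone t + δ), fun x hx y hy => ?_, fun t ht => ?_⟩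
  · have := hh x hx y hy
    have := hcone x y
    have := le_max_left (h y) (cone y + δ)
    have := le_max_right (h y) (cone y + δ)
    exact sub_le_iff_le_add.2 (max_le (by linarith) (by linarith))
  · split_ifs with htU
    · show max (h t) (cone t + δ) = h t + δ
      rw [hcone_eq t htU]
      exact max_eq_right (by linarith)
    · exact max_eq_left (by linarith [hδ t (mem_sdiff.2 ⟨ht, htU⟩)])

lemma l1Dist_eq_of_raise {U : Finset ℕ} (hU : U ⊆ Icc 1 n) {δ : ℝ} (hδ : 0 ≤ δ)
    (hδf : ∀ t ∈ U, h t < f t → δ ≤ f t - h t) {g : ℕ → ℝ}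
    (hg : ∀ t ∈ Icc 1 n, g t = if t ∈ U then h t + δ else h t) :
    l1Dist n f g = l1Dist n f h + δ * (#{t ∈ U | f t ≤ h t} - #{t ∈ U | h t < f t}) := by
  have hdiff : ∀ t ∈ Icc 1 n, |f t - g t| - |f t - h t| =
      if t ∈ U then (if h t < f t then -δ else δ) else 0 := by
    intro t ht
    rw [hg t ht]
    split_ifs with htU hft
    · rw [abs_of_pos (sub_pos.2 hft), abs_of_nonneg (by linarith [hδf t htU hft])]
      ring
    · rw [abs_of_nonpos (by linarith), abs_of_nonpos (by linarith)]
      ring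
    · ring
  rw [← sub_eq_iff_eq_add', l1Dist, l1Dist, ← sum_sub_distrib, sum_congr rfl hdiff, sum_ite_mem,
    inter_eq_right.2 hU, sum_ite, sum_const, sum_const]
  simp only [not_lt, nsmul_eq_mul]
  ring

lemma card_le_card_tight (hh : IsLipschitzAlong n X h)
    (hmin : IsMinOn (l1Dist n f) {g | IsLipschitzAlong n X g} h)
    {A : Finset ℕ} (hA : A ⊆ {t ∈ Icc 1 n | h t < f t}) :
    #A ≤ #{q ∈ {t ∈ Icc 1 n | f t ≤ h t} | ∃ p ∈ A, Tight X h p q} := by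
  have hAI : A ⊆ Icc 1 n := hA.trans (filter_subset _ _)
  set U := tightRegion n X h A
  have hUI : U ⊆ Icc 1 n := filter_subset _ _
  obtain ⟨δ, ⟨⟨g, hg, hgU⟩, hδf⟩, hδ0⟩ := (((eventually_exists_raise hh hAI).and
    ((eventually_all_finset {t ∈ U | h t < f t}).2 fun t ht =>
      nhdsWithin_le_nhds (eventually_lt_nhds (sub_pos.2 (mem_filter.1 ht).2)))).and
    eventually_mem_nhdsWithin).exists
  have hopt : l1Dist n f h ≤ l1Dist n f g := hmin hg
  rw [l1Dist_eq_of_raise hUI (le_of_lt hδ0) (fun t ht hft => (hδf t (mem_filter.2 ⟨ht, hft⟩)).le)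
    hgU] at hopt
  have hST : #{t ∈ U | h t < f t} ≤ #{t ∈ U | f t ≤ h t} := by
    have : (0:ℝ) ≤ #{t ∈ U | f t ≤ h t} - #{t ∈ U | h t < f t} :=
      nonneg_of_mul_nonneg_right (by linarith) hδ0
    exact_mod_cast sub_nonneg.1 this
  calc #A ≤ #{t ∈ U | h t < f t} := card_le_card fun p hp =>
        mem_filter.2 ⟨mem_filter.2 ⟨hAI hp, p, hp, by simp [Tight]⟩, (mem_filter.1 (hA hp)).2⟩
    _ ≤ #{t ∈ U | f t ≤ h t} := hST
    _ = _ := by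
        congr 1
        ext q
        simp only [U, tightRegion, mem_filter]
        tauto

def MonotoneWithGapsLE (n : ℕ) (X : ℕ → ℝ) (uM : ℝ) : Prop :=
  ∀ t ∈ Ico 1 n, X t ≤ X (t + 1) ∧ X (t + 1) ≤ X t + uM

noncomputable def violatedPairs (n : ℕ) (X f : ℕ → ℝ) : Finset (ℕ × ℕ) :=
  {p ∈ Icc 1 n ×ˢ Icc 1 n | p.1 < p.2 ∧ |X p.1 - X p.2| < |f p.1 - f p.2|}

lemma min_max_mem_violatedPairs {x y : ℕ} (hx : x ∈ Icc 1 n) (hy : y ∈ Icc 1 n)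
    (hxy : |X x - X y| < |f x - f y|) : (min x y, max x y) ∈ violatedPairs n X f := by
  rcases lt_trichotomy x y with h | rfl | h
  · simp [violatedPairs, min_eq_left h.le, max_eq_right h.le, hx, hy, h, hxy]
  · simp at hxy
  · simp [violatedPairs, min_eq_right h.le, max_eq_left h.le, hx, hy, h, abs_sub_comm, hxy]

lemma card_erase_le_card_touching {x y : ℕ} {J : Finset ℕ} (hJ : J ⊆ Icc 1 n) (hx : x ∈ Icc 1 n)
    (hy : y ∈ Icc 1 n)
    (hforced : ∀ z ∈ J, |X x - X z| < |f x - f z| ∨ |X z - X y| < |f z - f y|) :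
    #(J.erase x) ≤ #(touching (violatedPairs n X f) {x, y}) := by
  let σ : ℕ → ℕ × ℕ := fun z =>
    if |X x - X z| < |f x - f z| then (min x z, max x z) else (min z y, max z y)
  refine card_le_card_of_injOn σ (fun z hz => ?_) (fun z hz z' hz' hzz' => ?_)
  · have hzJ := (mem_erase.1 hz).2
    simp only [σ]
    split_ifs with hxz
    · refine mem_filter.2 ⟨min_max_mem_violatedPairs hx (hJ hzJ) hxz, ?_⟩
      rcases le_total x z with h | h <;> simp [h]
    · refine mem_filter.2
        ⟨min_max_mem_violatedPairs (hJ hzJ) hy ((hforced z hzJ).resolve_left hxz), ?_⟩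
      rcases le_total z y with h | h <;> simp [h]
  · have hzx := (mem_erase.1 hz).1
    have hz'x := (mem_erase.1 hz').1
    simp only [σ] at hzz'
    split_ifs at hzz' <;> simp only [Prod.mk.injEq] at hzz' <;> omega

lemma MonotoneWithGapsLE.sub_mem_Icc (hX : MonotoneWithGapsLE n X uM) {s t : ℕ} (hs : 1 ≤ s)
    (hst : s ≤ t) (ht : t ≤ n) : 0 ≤ X t - X s ∧ X t - X s ≤ uM * ((t : ℝ) - s) := by
  induction t, hst using Nat.le_induction with
  | base => simp
  | succ t hst ih =>
    obtain ⟨ih₁, ih₂⟩ := ih (by omega)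
    obtain ⟨h₁, h₂⟩ := hX t (mem_Ico.2 ⟨by omega, by omega⟩)
    push_cast
    constructor <;> linarith

lemma MonotoneWithGapsLE.abs_add_abs_le (hX : MonotoneWithGapsLE n X uM)
    (huM : 0 ≤ uM) {x y z d : ℕ} (hx : x ∈ Icc 1 n) (hy : y ∈ Icc 1 n) (hz : z ∈ Icc 1 n)
    (hzl : min x y ≤ z + d) (hzr : z ≤ max x y + d) :
    |X x - X z| + |X z - X y| ≤ |X x - X y| + 2 * uM * d := by
  wlog hxy : x ≤ y generalizing x y
  · have := this hy hx (by rwa [min_comm]) (by rwa [max_comm]) (by omega)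
    rw [abs_sub_comm (X y) (X z), abs_sub_comm (X z) (X x), abs_sub_comm (X y) (X x)] at this
    linarith
  simp only [mem_Icc] at hx hy hz
  rw [min_eq_left hxy] at hzl
  rw [max_eq_right hxy] at hzr
  have hxy' := hX.sub_mem_Icc hx.1 hxy hy.2
  rw [abs_sub_comm (X x) (X y), abs_of_nonneg hxy'.1]
  have hd : (0:ℝ) ≤ d := by positivity
  rcases le_total z x with hzx | hxz
  · have hzx' := hX.sub_mem_Icc hz.1 hzx hx.2
    have hzy' := hX.sub_mem_Icc hz.1 (hzx.trans hxy) hy.2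
    have : (x : ℝ) ≤ z + d := by exact_mod_cast hzl
    rw [abs_of_nonneg hzx'.1, abs_sub_comm (X z) (X y), abs_of_nonneg hzy'.1]
    nlinarith
  rcases le_total z y with hzy | hyz
  · have hxz' := hX.sub_mem_Icc hx.1 hxz hz.2
    have hzy' := hX.sub_mem_Icc hz.1 hzy hy.2
    rw [abs_sub_comm (X x) (X z), abs_of_nonneg hxz'.1, abs_sub_comm (X z) (X y),
      abs_of_nonneg hzy'.1]
    nlinarith
  · have hxz' := hX.sub_mem_Icc hx.1 hxz hz.2
    have hyz' := hX.sub_mem_Icc hy.1 hyz hz.2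
    have : (z : ℝ) ≤ y + d := by exact_mod_cast hzr
    rw [abs_sub_comm (X x) (X z), abs_of_nonneg hxz'.1, abs_of_nonneg hyz'.1]
    nlinarith

lemma lt_abs_or_lt_abs_of_abs_add_abs_lt {x y z : ℕ}
    (h : |X x - X z| + |X z - X y| < f x - f y) :
    |X x - X z| < |f x - f z| ∨ |X z - X y| < |f z - f y| := by
  by_contra! hc
  linarith [le_abs_self (f x - f z), le_abs_self (f z - f y), hc.1, hc.2]

lemma exists_nat_pred_mul_lt_le_mul {c w : ℝ} (hc : 0 < c) (hw : 0 < w) :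
    ∃ k : ℕ, 1 ≤ k ∧ c * ((k - 1 : ℕ) : ℝ) < w ∧ w ≤ c * k := by
  have hk : 1 ≤ ⌈w / c⌉₊ := Nat.one_le_iff_ne_zero.2 (Nat.ceil_pos.2 (by positivity)).ne'
  refine ⟨⌈w / c⌉₊, hk, ?_, ?_⟩
  · rw [Nat.cast_sub hk, Nat.cast_one, ← lt_div_iff₀' hc]
    linarith [Nat.ceil_lt_add_one (by positivity : 0 ≤ w / c)]
  · rw [← div_le_iff₀' hc]
    exact Nat.le_ceil _

lemma min_le_card_touching (hX : MonotoneWithGapsLE n X uM)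
    (huM : 0 ≤ uM) {x y : ℕ} (hx : x ∈ Icc 1 n) (hy : y ∈ Icc 1 n) (hxy : x ≠ y) {k : ℕ}
    (hk : 1 ≤ k) (hkw : 2 * uM * ((k - 1 : ℕ) : ℝ) < f x - f y - |X x - X y|) :
    min k (n - 1) ≤ #(touching (violatedPairs n X f) {x, y}) := by
  -- every point within `k - 1` steps of the segment between `x` and `y` is forced
  set J := Icc (max 1 (min x y + 1 - k)) (min n (max x y + k - 1))
  have hxJ : x ∈ J := by simp only [J, mem_Icc] at hx ⊢; omega
  have hJ : min k (n - 1) ≤ #(J.erase x) := by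
    rw [card_erase_of_mem hxJ, Nat.card_Icc]
    simp only [mem_Icc] at hx hy
    omega
  have hJI : J ⊆ Icc 1 n := fun z hz => by simp only [J, mem_Icc] at hz ⊢; omega
  refine hJ.trans (card_erase_le_card_touching hJI hx hy fun z hz =>
    lt_abs_or_lt_abs_of_abs_add_abs_lt ?_)
  simp only [J, mem_Icc] at hz
  have := hX.abs_add_abs_le huM hx hy (z := z) (d := k - 1) (mem_Icc.2 (by omega))
    (by omega) (by omega)
  linarith

lemma sub_sub_abs_le_mul_card_touching
    (hX : MonotoneWithGapsLE n X uM) (huM : 0 < uM) {a b : ℝ}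
    (hf : ∀ t ∈ Icc 1 n, f t ∈ Set.Icc a b) {x y : ℕ} (hx : x ∈ Icc 1 n) (hy : y ∈ Icc 1 n) :
    f x - f y - |X x - X y| ≤
      2 * max uM ((b - a) / (n - 1)) * #(touching (violatedPairs n X f) {x, y}) := by
  set w := f x - f y - |X x - X y|
  set K := max uM ((b - a) / (n - 1))
  set T := touching (violatedPairs n X f) {x, y}
  have hK : uM ≤ K := le_max_left _ _
  rcases le_or_gt w 0 with hw | hw
  · have : 0 ≤ 2 * K * #T := by positivity
    linarith
  have hxy : x ≠ y := by rintro rfl; simp [w] at hw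
  obtain ⟨k, hk, hkw', hkw⟩ := exists_nat_pred_mul_lt_le_mul (by positivity : 0 < 2 * uM) hw
  have hT := min_le_card_touching hX huM.le hx hy hxy hk hkw'
  rcases le_total k (n - 1) with hkn | hkn
  · have : (k : ℝ) ≤ #T := by exact_mod_cast min_eq_left hkn ▸ hT
    nlinarith
  · have hn : 2 ≤ n := by simp only [mem_Icc] at hx hy; omega
    have hnT : (n : ℝ) - 1 ≤ #T := by
      rw [← Nat.cast_one, ← Nat.cast_sub (by omega : 1 ≤ n)]
      exact_mod_cast min_eq_right hkn ▸ hT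
    have hwr : w ≤ b - a := by
      linarith [(hf x hx).2, (hf y hy).1, abs_nonneg (X x - X y)]
    have : b - a ≤ K * (n - 1) := by
      have : (2 : ℝ) ≤ n := by exact_mod_cast hn
      rw [← div_le_iff₀ (by linarith)]
      exact le_max_right _ _
    nlinarith

lemma exists_injOn_tight_above (hh : IsLipschitzAlong n X h)
    (hmin : IsMinOn (l1Dist n f) {g | IsLipschitzAlong n X g} h) :
    ∃ φ : ℕ → ℕ, Set.InjOn φ ({t ∈ Icc 1 n | h t < f t} : Finset ℕ) ∧
      ∀ p ∈ {t ∈ Icc 1 n | h t < f t}, φ p ∈ {t ∈ Icc 1 n | f t ≤ h t} ∧ Tight X h p (φ p) :=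
  exists_injOn_of_forall_card_le fun _ hA => card_le_card_tight hh hmin hA

lemma exists_injOn_tight_below (hh : IsLipschitzAlong n X h)
    (hmin : IsMinOn (l1Dist n f) {g | IsLipschitzAlong n X g} h) :
    ∃ ψ : ℕ → ℕ, Set.InjOn ψ ({t ∈ Icc 1 n | f t < h t} : Finset ℕ) ∧
      ∀ m ∈ {t ∈ Icc 1 n | f t < h t}, ψ m ∈ {t ∈ Icc 1 n | h t ≤ f t} ∧ Tight X h (ψ m) m := by
  have hmin' : IsMinOn (l1Dist n (-f)) {g | IsLipschitzAlong n X g} (-h) :=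
    isMinOn_iff.2 fun g hg => calc
      l1Dist n (-f) (-h) = l1Dist n f h := l1Dist_neg f h
      _ ≤ l1Dist n f (-g) := hmin (IsLipschitzAlong.neg hg)
      _ = l1Dist n (-f) g := by rw [← l1Dist_neg, neg_neg]
  simpa [tight_neg] using exists_injOn_tight_above hh.neg hmin'

lemma l1Dist_le_sum_of_cover {E : Finset (ℕ × ℕ)}
    (hE : ∀ e ∈ E, h e.1 ≤ f e.1 ∧ f e.2 ≤ h e.2 ∧ Tight X h e.1 e.2)
    (hP : {t ∈ Icc 1 n | h t < f t} ⊆ E.image Prod.fst)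
    (hM : {t ∈ Icc 1 n | f t < h t} ⊆ E.image Prod.snd) :
    l1Dist n f h ≤ ∑ e ∈ E, (f e.1 - f e.2 - |X e.1 - X e.2|) := by
  have hsplit : l1Dist n f h =
      ∑ t ∈ Icc 1 n with h t < f t, (f t - h t) + ∑ t ∈ Icc 1 n with f t < h t, (h t - f t) := by
    rw [sum_filter, sum_filter, ← sum_add_distrib]
    refine sum_congr rfl fun t _ => ?_
    rcases lt_trichotomy (h t) (f t) with hlt | heq | hgt
    · simp [hlt, hlt.not_gt, abs_of_pos (sub_pos.2 hlt)]
    · simp [heq]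
    · simp [hgt, hgt.not_gt, abs_of_neg (sub_neg.2 hgt)]
  have hfst : ∑ t ∈ Icc 1 n with h t < f t, (f t - h t) ≤ ∑ e ∈ E, (f e.1 - h e.1) := by
    refine (sum_le_sum_of_subset_of_nonneg hP fun t ht _ => ?_).trans
      (sum_image_le_of_nonneg fun t ht => ?_) <;>
    · obtain ⟨e, he, rfl⟩ := mem_image.1 ht
      linarith [(hE e he).1]
  have hsnd : ∑ t ∈ Icc 1 n with f t < h t, (h t - f t) ≤ ∑ e ∈ E, (h e.2 - f e.2) := by
    refine (sum_le_sum_of_subset_of_nonneg hM fun t ht _ => ?_).trans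
      (sum_image_le_of_nonneg fun t ht => ?_) <;>
    · obtain ⟨e, he, rfl⟩ := mem_image.1 ht
      linarith [(hE e he).2.1]
  calc l1Dist n f h ≤ ∑ e ∈ E, ((f e.1 - h e.1) + (h e.2 - f e.2)) := by
        rw [sum_add_distrib]; linarith
    _ ≤ _ := sum_le_sum fun e he => by
        have := (hE e he).2.2
        unfold Tight at this
        linarith

theorem exists_isLipschitzAlong_l1Dist_le
    (hX : MonotoneWithGapsLE n X uM) (huM : 0 < uM) {a b : ℝ}
    (hab : a ≤ b) (hf : ∀ t ∈ Icc 1 n, f t ∈ Set.Icc a b) :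
    ∃ h, IsLipschitzAlong n X h ∧
      l1Dist n f h ≤ 4 * max uM ((b - a) / (n - 1)) * #(violatedPairs n X f) := by
  obtain ⟨h, hh, hmin⟩ := exists_isMinOn_l1Dist (X := X) hab hf
  obtain ⟨φ, hφ, hφP⟩ := exists_injOn_tight_above hh hmin
  obtain ⟨ψ, hψ, hψM⟩ := exists_injOn_tight_below hh hmin
  obtain ⟨E, hE, hEgood, hEP, hEM⟩ := exists_isMatching_of_injOn (r := Tight X h)
    (fun _ _ _ => Tight.trans)
    (monotone_filter_right _ fun _ _ => le_of_lt) (monotone_filter_right _ fun _ _ => le_of_lt)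
    (disjoint_filter.2 fun t _ (h₁ : h t < f t) h₂ => h₁.not_ge h₂)
    (disjoint_filter.2 fun t _ (h₁ : h t ≤ f t) h₂ => h₁.not_gt h₂)
    hφ hψ hφP hψM
  have hEI : ∀ e ∈ E, e.1 ∈ Icc 1 n ∧ e.2 ∈ Icc 1 n := fun e he =>
    ⟨(mem_filter.1 (hEgood e he).1).1, (mem_filter.1 (hEgood e he).2.1).1⟩
  refine ⟨h, hh, ?_⟩
  set K := max uM ((b - a) / (n - 1))
  calc l1Dist n f h ≤ ∑ e ∈ E, (f e.1 - f e.2 - |X e.1 - X e.2|) :=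
        l1Dist_le_sum_of_cover (fun e he => ⟨(mem_filter.1 (hEgood e he).1).2,
          (mem_filter.1 (hEgood e he).2.1).2, (hEgood e he).2.2⟩) hEP hEM
    _ ≤ ∑ e ∈ E, 2 * K * #(touching (violatedPairs n X f) {e.1, e.2}) := sum_le_sum fun e he =>
        sub_sub_abs_le_mul_card_touching hX huM hf (hEI e he).1 (hEI e he).2
    _ ≤ 2 * K * (2 * #(violatedPairs n X f)) := by
        rw [← mul_sum]
        gcongr
        exact_mod_cast hE.sum_card_touching_le _
    _ = 4 * K * #(violatedPairs n X f) := by ring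

end Line

end LineLipschitz

open LineLipschitz

lemma m1_neg_eq_abs_sub {n : ℕ} {u : ℕ → ℝ} (hu : ∀ t ∈ Ico 1 n, 0 ≤ u t) {x y : ℕ}
    (hx : x ∈ Icc 1 n) (hy : y ∈ Icc 1 n) :
    m1 (fun t => -u t) u x y = |∑ t ∈ range x, u t - ∑ t ∈ range y, u t| := by
  have hnonneg : ∀ {x y}, x ∈ Icc 1 n → y ∈ Icc 1 n → 0 ≤ ∑ t ∈ Ico x y, u t := fun hx hy =>
    sum_nonneg fun t ht => hu t (by simp only [mem_Icc, mem_Ico] at hx hy ht ⊢; omega)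
  simp only [m1, sum_neg_distrib, sub_neg_eq_add]
  rcases le_total x y with hxy | hyx
  · rw [Ico_eq_empty_of_le hxy, sum_empty, zero_add, abs_sub_comm, ← sum_Ico_eq_sub _ hxy,
      abs_of_nonneg (hnonneg hx hy)]
  · rw [Ico_eq_empty_of_le hyx, sum_empty, add_zero, ← sum_Ico_eq_sub _ hyx,
      abs_of_nonneg (hnonneg hy hx)]

lemma vs1_neg_eq {n : ℕ} {u : ℕ → ℝ} (hu : ∀ t ∈ Ico 1 n, 0 ≤ u t) (f : ℕ → ℝ) {x y : ℕ}
    (hx : x ∈ Icc 1 n) (hy : y ∈ Icc 1 n) :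
    vs1 (fun t => -u t) u f x y =
      |f x - f y| - |∑ t ∈ range x, u t - ∑ t ∈ range y, u t| := by
  rw [vs1, m1_neg_eq_abs_sub hu hx hy, m1_neg_eq_abs_sub hu hy hx, abs_sub_comm (∑ t ∈ range y, _),
    max_sub_sub_right, ← neg_sub (f x), ← abs_eq_max_neg]

/-- for `f : [n] → [a,b]` with `r = b − a > 0`, bounds `l = −u`
(`u > 0`), and `u_M = max_t u(t)`, the number of violated unordered pairs of `f`
is at least `(L1(f,P)/4) · min{1/u_M, (n−1)/r}`. -/
theorem stmt19 (n : ℕ) (hn : 2 ≤ n) (a b : ℝ) (hab : a < b)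
    (u : ℕ → ℝ) (hu : ∀ t : ℕ, 1 ≤ t → t + 1 ≤ n → 0 < u t)
    (f : ℕ → ℝ) (hf : ∀ t : ℕ, 1 ≤ t → t ≤ n → a ≤ f t ∧ f t ≤ b)
    (uM : ℝ)
    (huM : uM = (Finset.Icc 1 (n - 1)).sup'
      (Finset.nonempty_Icc.mpr (by omega)) u) :
    (sInf {s : ℝ | ∃ h : ℕ → ℝ,
        (∀ t : ℕ, 1 ≤ t → t + 1 ≤ n →
          -u t ≤ h (t + 1) - h t ∧ h (t + 1) - h t ≤ u t) ∧
        s = ∑ t ∈ Finset.Icc 1 n, |f t - h t|} / 4)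
      * min (1 / uM) (((n : ℝ) - 1) / (b - a))
      ≤ ((((Finset.Icc 1 n) ×ˢ (Finset.Icc 1 n)).filter
          (fun p : ℕ × ℕ => p.1 < p.2 ∧ 0 < vs1 (fun t => -u t) u f p.1 p.2)).card : ℝ) := by
  set X : ℕ → ℝ := fun x => ∑ t ∈ range x, u t
  have hu' : ∀ t ∈ Ico 1 n, 0 < u t := fun t ht => hu t (mem_Ico.1 ht).1 (mem_Ico.1 ht).2
  have huM' : ∀ t ∈ Ico 1 n, u t ≤ uM := fun t ht =>
    huM ▸ le_sup' u (by simp only [mem_Ico, mem_Icc] at ht ⊢; omega)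
  have hX : ∀ t ∈ Ico 1 n, X t ≤ X (t + 1) ∧ X (t + 1) ≤ X t + uM := fun t ht => by
    simp only [X, sum_range_succ]
    constructor <;> linarith [hu' t ht, huM' t ht]
  have huM0 : 0 < uM := (hu' 1 (mem_Ico.2 ⟨le_rfl, hn⟩)).trans_le (huM' 1 (mem_Ico.2 ⟨le_rfl, hn⟩))
  obtain ⟨h, hh, hcost⟩ := exists_isLipschitzAlong_l1Dist_le hX huM0 hab.le
    fun t ht => hf t (mem_Icc.1 ht).1 (mem_Icc.1 ht).2
  set K := max uM ((b - a) / (n - 1))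
  have hV : violatedPairs n X f = ((Finset.Icc 1 n) ×ˢ (Finset.Icc 1 n)).filter
      (fun p : ℕ × ℕ => p.1 < p.2 ∧ 0 < vs1 (fun t => -u t) u f p.1 p.2) :=
    filter_congr fun p hp => by
      rw [mem_product] at hp
      rw [vs1_neg_eq (fun t ht => (hu' t ht).le) f hp.1 hp.2, sub_pos]
  have hL1 : sInf {s : ℝ | ∃ h : ℕ → ℝ,
        (∀ t : ℕ, 1 ≤ t → t + 1 ≤ n → -u t ≤ h (t + 1) - h t ∧ h (t + 1) - h t ≤ u t) ∧
        s = ∑ t ∈ Finset.Icc 1 n, |f t - h t|} ≤ l1Dist n f h := by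
    refine csInf_le ⟨0, fun s ⟨g, _, hs⟩ => hs ▸ sum_nonneg fun _ _ => abs_nonneg _⟩
      ⟨h, fun t ht hnt => abs_le.1 ?_, rfl⟩
    have := hh.abs_sub_le (x := t + 1) (y := t) (by simp only [mem_Icc]; omega)
      (by simp only [mem_Icc]; omega)
    simpa [X, sum_range_succ, abs_of_pos (hu t ht hnt)] using this
  have hmin : min (1 / uM) (((n : ℝ) - 1) / (b - a)) ≤ 1 / K := by
    rcases max_choice uM ((b - a) / (n - 1)) with hK | hK <;> rw [show K = _ from hK]
    · exact min_le_left _ _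
    · exact (min_le_right _ _).trans_eq (one_div_div _ _).symm
  have hK0 : 0 < K := huM0.trans_le (le_max_left _ _)
  rw [← hV]
  calc _ ≤ 4 * K * #(violatedPairs n X f) / 4 * (1 / K) := by
        gcongr
        · have : (2 : ℝ) ≤ n := by exact_mod_cast hn
          exact le_min (by positivity) (div_nonneg (by linarith) (by linarith))
        · exact hL1.trans hcost
    _ = #(violatedPairs n X f) := by field_simp
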